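/- Variance decomposition of the AIPW score with true nuisances: for every measurable D:𝒳→[0,1], Var(ψ(D, π₁, (μ₁,μ₀))) = Var(D(X)·μ₁(X) + (1−D(X))·μ₀(X)) + E[D(X)²·σ₁²(X)/π₁(X) + (1−D(X))²·σ₀²(X)/(1−π₁(X))]. -/

import Mathlib

open MeasureTheory ProbabilityTheory Filter Topology
open scoped Classical

/-- AIPW score `ψ(D, p, (m₁, m₀))` evaluated at a sample point `ω`. -/
noncomputable def aipw {Ω 𝒳 : Type*} (X : Ω → 𝒳) (A Y : Ω → ℝ)
    (D p m₁ m₀ : 𝒳 → ℝ) (ω : Ω) : ℝ :=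
  (A ω * D (X ω) + (1 - A ω) * (1 - D (X ω))) /
      (A ω * p (X ω) + (1 - A ω) * (1 - p (X ω))) *
    (Y ω - (A ω * m₁ (X ω) + (1 - A ω) * m₀ (X ω)))
  + D (X ω) * m₁ (X ω) + (1 - D (X ω)) * m₀ (X ω)

open scoped ENNReal

/-!
Write `ψ = g(X) + R` with `g = D μ₁ + (1 - D) μ₀` and
`R = (D / π₁) A (Y - μ₁) + ((1 - D) / (1 - π₁)) (1 - A) (Y - μ₀)`.
The moment conditions make each arm's residual conditionally centred given `X`, so
`E[R | X] = 0`: `R` has mean zero and is uncorrelated with `g(X)`, whence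
`Var ψ = Var g(X) + E[R²]`. As `A (1 - A) = 0`, the arms do not interact in `R²`, and
`E[R² | X] = (D / π₁)² σ₁² π₁ + ((1 - D) / (1 - π₁))² σ₀² (1 - π₁)`.
-/

section Bounded

variable {Ω : Type*} {mΩ : MeasurableSpace Ω} {P : Measure Ω}

theorem memLp_top_of_mem_Icc {f : Ω → ℝ} {a b : ℝ} (hf : AEStronglyMeasurable f P)
    (hab : ∀ ω, f ω ∈ Set.Icc a b) : MemLp f ∞ P :=
  memLp_top_of_bound hf (max |a| |b|) (ae_of_all _ fun ω => abs_le_max_abs_abs (hab ω).1 (hab ω).2)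

theorem div_mem_Icc_zero_one_div {x y c : ℝ} (hc : 0 < c) (hx : x ∈ Set.Icc 0 1) (hy : c ≤ y) :
    x / y ∈ Set.Icc 0 (1 / c) :=
  ⟨div_nonneg hx.1 (hc.le.trans hy), div_le_div₀ zero_le_one hx.2 hc hy⟩

end Bounded

section ConditionalMoments

variable {Ω : Type*} {m mΩ : MeasurableSpace Ω} {P : Measure Ω}

theorem condExp_one_sub [IsFiniteMeasure P] (hm : m ≤ mΩ) {A p : Ω → ℝ} (hA : Integrable A P)
    (hAp : P[A | m] =ᵐ[P] p) : P[fun ω => 1 - A ω | m] =ᵐ[P] fun ω => 1 - p ω := by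
  filter_upwards [condExp_sub (integrable_const 1) hA m, hAp] with ω h₁ h₂
  simp only [Pi.sub_apply, condExp_const hm, h₂] at h₁
  exact h₁

theorem condExp_mul_sub_eq_zero [IsFiniteMeasure P] {B Y μ p : Ω → ℝ} (hB : MemLp B ∞ P)
    (hY : MemLp Y 2 P) (hμ : MemLp μ 2 P) (hμm : StronglyMeasurable[m] μ)
    (hBp : P[B | m] =ᵐ[P] p) (hBY : P[fun ω => B ω * Y ω | m] =ᵐ[P] fun ω => μ ω * p ω) :
    P[fun ω => B ω * (Y ω - μ ω) | m] =ᵐ[P] 0 := by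
  have hμB : Integrable (μ * B) P := (hμ.integrable one_le_two).mul_of_top_left hB
  have hsplit : (fun ω => B ω * (Y ω - μ ω)) = (fun ω => B ω * Y ω) - μ * B := by
    ext ω; simp only [Pi.sub_apply, Pi.mul_apply]; ring
  rw [hsplit]
  filter_upwards [condExp_sub ((hY.mul' hB).integrable one_le_two) hμB m, hBY, hBp,
    condExp_mul_of_stronglyMeasurable_left hμm hμB (hB.integrable le_top)] with ω h h₁ hp h₂
  simp only [h, Pi.sub_apply, h₁, h₂, Pi.mul_apply, hp, sub_self, Pi.zero_apply]

theorem condExp_mul_sub_sq [IsFiniteMeasure P] {B Y μ p σ : Ω → ℝ} (hB : MemLp B ∞ P)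
    (hY : MemLp Y 2 P) (hμ : MemLp μ 2 P) (hμm : StronglyMeasurable[m] μ)
    (hBp : P[B | m] =ᵐ[P] p) (hBY : P[fun ω => B ω * Y ω | m] =ᵐ[P] fun ω => μ ω * p ω)
    (hBY2 : P[fun ω => B ω * Y ω ^ 2 | m] =ᵐ[P] fun ω => (μ ω ^ 2 + σ ω) * p ω) :
    P[fun ω => B ω * (Y ω - μ ω) ^ 2 | m] =ᵐ[P] fun ω => σ ω * p ω := by
  have hBY_L2 : MemLp (fun ω => B ω * Y ω) 2 P := hY.mul' hB
  have hBY_int : Integrable (fun ω => B ω * Y ω) P := hBY_L2.integrable one_le_two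
  have hBY2_int : Integrable (fun ω => B ω * Y ω ^ 2) P := hY.integrable_sq.mul_of_top_right hB
  have hcross : Integrable ((fun ω => 2 * μ ω) * fun ω => B ω * Y ω) P :=
    (hμ.const_mul 2).integrable_mul hBY_L2
  have hμ2B : Integrable (μ ^ 2 * B) P := hμ.integrable_sq.mul_of_top_left hB
  have hsplit : (fun ω => B ω * (Y ω - μ ω) ^ 2)
      = (fun ω => B ω * Y ω ^ 2) - ((fun ω => 2 * μ ω) * (fun ω => B ω * Y ω)
        - μ ^ 2 * B) := by
    ext ω; simp only [Pi.sub_apply, Pi.mul_apply, Pi.pow_apply]; ring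
  rw [hsplit]
  filter_upwards [condExp_sub hBY2_int (hcross.sub hμ2B) m, condExp_sub hcross hμ2B m,
    condExp_mul_of_stronglyMeasurable_left (hμm.const_mul 2) hcross hBY_int,
    condExp_mul_of_stronglyMeasurable_left (hμm.pow 2) hμ2B (hB.integrable le_top),
    hBp, hBY, hBY2] with ω h h' h₁ h₂ hp hy hy2
  simp only [Pi.sub_apply, Pi.mul_apply, Pi.pow_apply] at h h' h₁ h₂
  rw [h, h', h₁, h₂, hp, hy, hy2]
  ring

theorem condExp_mul_add_mul [IsFiniteMeasure P] {w₁ w₀ Z₁ Z₀ s₁ s₀ : Ω → ℝ}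
    (hw₁ : MemLp w₁ ∞ P) (hw₁m : StronglyMeasurable[m] w₁)
    (hw₀ : MemLp w₀ ∞ P) (hw₀m : StronglyMeasurable[m] w₀)
    (hZ₁ : Integrable Z₁ P) (hZ₀ : Integrable Z₀ P)
    (hs₁ : P[Z₁ | m] =ᵐ[P] s₁) (hs₀ : P[Z₀ | m] =ᵐ[P] s₀) :
    P[w₁ * Z₁ + w₀ * Z₀ | m] =ᵐ[P] w₁ * s₁ + w₀ * s₀ := by
  have h₁ : Integrable (w₁ * Z₁) P := hZ₁.mul_of_top_right hw₁
  have h₀ : Integrable (w₀ * Z₀) P := hZ₀.mul_of_top_right hw₀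
  filter_upwards [condExp_add h₁ h₀ m, condExp_mul_of_stronglyMeasurable_left hw₁m h₁ hZ₁,
    condExp_mul_of_stronglyMeasurable_left hw₀m h₀ hZ₀, hs₁, hs₀] with ω h h₁ h₀ e₁ e₀
  simp only [h, Pi.add_apply, h₁, h₀, Pi.mul_apply, e₁, e₀]

theorem variance_add_of_condExp_eq_zero [IsProbabilityMeasure P] (hm : m ≤ mΩ) {g R : Ω → ℝ}
    (hg : MemLp g 2 P) (hgm : StronglyMeasurable[m] g) (hR : MemLp R 2 P)
    (hRm : P[R | m] =ᵐ[P] 0) :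
    variance (g + R) P = variance g P + ∫ ω, R ω ^ 2 ∂P := by
  have hER : P[R] = 0 := by
    rw [← integral_condExp hm, integral_congr_ae hRm]
    simp
  have hEgR : P[g * R] = 0 := by
    rw [← integral_condExp hm, integral_congr_ae ((condExp_mul_of_stronglyMeasurable_left hgm
      (hg.integrable_mul hR) (hR.integrable one_le_two)).trans hRm.mul_left)]
    simp
  rw [variance_add hg hR, covariance_eq_sub hg hR, variance_eq_sub hR, hER, hEgR]
  simp

end ConditionalMoments

section Residual

variable {Ω : Type*} {m mΩ : MeasurableSpace Ω} {P : Measure Ω}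

def ipwResidual (A Y w₁ w₀ μ₁ μ₀ : Ω → ℝ) (ω : Ω) : ℝ :=
  w₁ ω * (A ω * (Y ω - μ₁ ω)) + w₀ ω * ((1 - A ω) * (Y ω - μ₀ ω))

theorem aipw_eq_add_ipwResidual {𝒳 : Type*} {X : Ω → 𝒳} {A : Ω → ℝ}
    (hA : ∀ ω, A ω = 0 ∨ A ω = 1) (Y : Ω → ℝ) (D p m₁ m₀ : 𝒳 → ℝ) :
    aipw X A Y D p m₁ m₀
      = (fun ω => D (X ω) * m₁ (X ω) + (1 - D (X ω)) * m₀ (X ω))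
        + ipwResidual A Y (fun ω => D (X ω) / p (X ω)) (fun ω => (1 - D (X ω)) / (1 - p (X ω)))
          (fun ω => m₁ (X ω)) (fun ω => m₀ (X ω)) := by
  funext ω
  rcases hA ω with h | h <;> simp only [aipw, ipwResidual, Pi.add_apply, h] <;> ring

theorem memLp_ipwResidual [IsFiniteMeasure P] {A Y w₁ w₀ μ₁ μ₀ : Ω → ℝ} (hA : MemLp A ∞ P)
    (hY : MemLp Y 2 P) (hw₁ : MemLp w₁ ∞ P) (hw₀ : MemLp w₀ ∞ P)
    (hμ₁ : MemLp μ₁ 2 P) (hμ₀ : MemLp μ₀ 2 P) :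
    MemLp (ipwResidual A Y w₁ w₀ μ₁ μ₀) 2 P := by
  have h₁ : MemLp (fun ω => A ω * (Y ω - μ₁ ω)) 2 P := (hY.sub hμ₁).mul' hA
  have h₀ : MemLp (fun ω => (1 - A ω) * (Y ω - μ₀ ω)) 2 P :=
    (hY.sub hμ₀).mul' ((memLp_const 1).sub hA)
  exact (h₁.mul' hw₁).add (h₀.mul' hw₀)

theorem condExp_ipwResidual [IsFiniteMeasure P] (hm : m ≤ mΩ) {A Y p w₁ w₀ μ₁ μ₀ : Ω → ℝ}
    (hA : MemLp A ∞ P) (hY : MemLp Y 2 P)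
    (hw₁ : MemLp w₁ ∞ P) (hw₁m : StronglyMeasurable[m] w₁)
    (hw₀ : MemLp w₀ ∞ P) (hw₀m : StronglyMeasurable[m] w₀)
    (hμ₁ : MemLp μ₁ 2 P) (hμ₁m : StronglyMeasurable[m] μ₁)
    (hμ₀ : MemLp μ₀ 2 P) (hμ₀m : StronglyMeasurable[m] μ₀)
    (hAp : P[A | m] =ᵐ[P] p)
    (hAY : P[fun ω => A ω * Y ω | m] =ᵐ[P] fun ω => μ₁ ω * p ω)
    (hAY' : P[fun ω => (1 - A ω) * Y ω | m] =ᵐ[P] fun ω => μ₀ ω * (1 - p ω)) :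
    P[ipwResidual A Y w₁ w₀ μ₁ μ₀ | m] =ᵐ[P] 0 := by
  have hA' : MemLp (fun ω => 1 - A ω) ∞ P := (memLp_const 1).sub hA
  refine (condExp_mul_add_mul hw₁ hw₁m hw₀ hw₀m
    (((hY.sub hμ₁).mul' hA).integrable one_le_two) (((hY.sub hμ₀).mul' hA').integrable one_le_two)
    (condExp_mul_sub_eq_zero hA hY hμ₁ hμ₁m hAp hAY)
    (condExp_mul_sub_eq_zero hA' hY hμ₀ hμ₀m
      (condExp_one_sub hm (hA.integrable le_top) hAp) hAY')).trans ?_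
  simp

theorem condExp_ipwResidual_sq [IsFiniteMeasure P] (hm : m ≤ mΩ)
    {A Y p w₁ w₀ μ₁ μ₀ σ₁ σ₀ : Ω → ℝ} (hA01 : ∀ ω, A ω = 0 ∨ A ω = 1)
    (hA : MemLp A ∞ P) (hY : MemLp Y 2 P)
    (hw₁ : MemLp w₁ ∞ P) (hw₁m : StronglyMeasurable[m] w₁)
    (hw₀ : MemLp w₀ ∞ P) (hw₀m : StronglyMeasurable[m] w₀)
    (hμ₁ : MemLp μ₁ 2 P) (hμ₁m : StronglyMeasurable[m] μ₁)
    (hμ₀ : MemLp μ₀ 2 P) (hμ₀m : StronglyMeasurable[m] μ₀)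
    (hAp : P[A | m] =ᵐ[P] p)
    (hAY : P[fun ω => A ω * Y ω | m] =ᵐ[P] fun ω => μ₁ ω * p ω)
    (hAY' : P[fun ω => (1 - A ω) * Y ω | m] =ᵐ[P] fun ω => μ₀ ω * (1 - p ω))
    (hAY2 : P[fun ω => A ω * Y ω ^ 2 | m] =ᵐ[P] fun ω => (μ₁ ω ^ 2 + σ₁ ω) * p ω)
    (hAY2' : P[fun ω => (1 - A ω) * Y ω ^ 2 | m]
      =ᵐ[P] fun ω => (μ₀ ω ^ 2 + σ₀ ω) * (1 - p ω)) :
    P[fun ω => ipwResidual A Y w₁ w₀ μ₁ μ₀ ω ^ 2 | m]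
      =ᵐ[P] fun ω => w₁ ω ^ 2 * (σ₁ ω * p ω) + w₀ ω ^ 2 * (σ₀ ω * (1 - p ω)) := by
  have hA' : MemLp (fun ω => 1 - A ω) ∞ P := (memLp_const 1).sub hA
  have hsq : (fun ω => ipwResidual A Y w₁ w₀ μ₁ μ₀ ω ^ 2)
      = w₁ ^ 2 * (fun ω => A ω * (Y ω - μ₁ ω) ^ 2)
        + w₀ ^ 2 * (fun ω => (1 - A ω) * (Y ω - μ₀ ω) ^ 2) := by
    funext ω
    rcases hA01 ω with h | h <;>
      simp only [ipwResidual, Pi.add_apply, Pi.mul_apply, Pi.pow_apply, h] <;> ring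
  have hw₁sq : MemLp (w₁ ^ 2) ∞ P := by simpa only [sq] using hw₁.mul hw₁
  have hw₀sq : MemLp (w₀ ^ 2) ∞ P := by simpa only [sq] using hw₀.mul hw₀
  rw [hsq]
  exact condExp_mul_add_mul hw₁sq (hw₁m.pow 2) hw₀sq (hw₀m.pow 2)
    (((hY.sub hμ₁).integrable_sq).mul_of_top_right hA)
    (((hY.sub hμ₀).integrable_sq).mul_of_top_right hA')
    (condExp_mul_sub_sq hA hY hμ₁ hμ₁m hAp hAY hAY2)
    (condExp_mul_sub_sq hA' hY hμ₀ hμ₀m (condExp_one_sub hm (hA.integrable le_top) hAp)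
      hAY' hAY2')

end Residual

theorem stmt_9_general {Ω 𝒳 : Type*} [MeasurableSpace Ω] [MeasurableSpace 𝒳]
    (P : Measure Ω) [IsProbabilityMeasure P]
    (X : Ω → 𝒳) (A Y : Ω → ℝ)
    (hX : Measurable X) (hA : Measurable A)
    (hAbin : ∀ ω, A ω = 0 ∨ A ω = 1) (hYL2 : MemLp Y 2 P)
    (c : ℝ) (hc : c ∈ Set.Ioo (0 : ℝ) (1 / 2))
    (π₁ : 𝒳 → ℝ) (hπ₁m : Measurable π₁) (hπ₁r : ∀ x, π₁ x ∈ Set.Icc c (1 - c))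
    (hcondA : P[A | MeasurableSpace.comap X inferInstance]
      =ᵐ[P] fun ω => π₁ (X ω))
    (μ₁ μ₀ : 𝒳 → ℝ) (hμ₁m : Measurable μ₁) (hμ₀m : Measurable μ₀)
    (hμ₁L2 : MemLp (fun ω => μ₁ (X ω)) 2 P) (hμ₀L2 : MemLp (fun ω => μ₀ (X ω)) 2 P)
    (hcond1 : P[fun ω => A ω * Y ω | MeasurableSpace.comap X inferInstance]
      =ᵐ[P] fun ω => μ₁ (X ω) * π₁ (X ω))
    (hcond0 : P[fun ω => (1 - A ω) * Y ω | MeasurableSpace.comap X inferInstance]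
      =ᵐ[P] fun ω => μ₀ (X ω) * (1 - π₁ (X ω)))
    (σ₁sq σ₀sq : 𝒳 → ℝ)
    (hcondsq1 : P[fun ω => A ω * Y ω ^ 2 | MeasurableSpace.comap X inferInstance]
      =ᵐ[P] fun ω => (μ₁ (X ω) ^ 2 + σ₁sq (X ω)) * π₁ (X ω))
    (hcondsq0 : P[fun ω => (1 - A ω) * Y ω ^ 2 | MeasurableSpace.comap X inferInstance]
      =ᵐ[P] fun ω => (μ₀ (X ω) ^ 2 + σ₀sq (X ω)) * (1 - π₁ (X ω))) :
    ∀ D : 𝒳 → ℝ, Measurable D → (∀ x, D x ∈ Set.Icc (0 : ℝ) 1) →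
      variance (aipw X A Y D π₁ μ₁ μ₀) P
        = variance (fun ω => D (X ω) * μ₁ (X ω) + (1 - D (X ω)) * μ₀ (X ω)) P
          + ∫ ω, (D (X ω) ^ 2 * σ₁sq (X ω) / π₁ (X ω)
              + (1 - D (X ω)) ^ 2 * σ₀sq (X ω) / (1 - π₁ (X ω))) ∂P := by
  intro D hD hDr
  have hm : MeasurableSpace.comap X inferInstance ≤ ‹MeasurableSpace Ω› := hX.comap_le
  have hXm {f : 𝒳 → ℝ} (hf : Measurable f) :
      StronglyMeasurable[MeasurableSpace.comap X inferInstance] fun ω => f (X ω) :=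
    (hf.comp (comap_measurable X)).stronglyMeasurable
  have hD' (x : 𝒳) : 1 - D x ∈ Set.Icc (0 : ℝ) 1 := Set.Icc.mem_iff_one_sub_mem.mp (hDr x)
  have hπ' (x : 𝒳) : c ≤ 1 - π₁ x := by linarith [(hπ₁r x).2]
  have hAb : MemLp A ∞ P := memLp_top_of_mem_Icc (a := 0) (b := 1) hA.aestronglyMeasurable
    fun ω => by rcases hAbin ω with h | h <;> simp [h]
  have hw₁m : Measurable fun x => D x / π₁ x := hD.div hπ₁m
  have hw₀m : Measurable fun x => (1 - D x) / (1 - π₁ x) :=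
    (measurable_const.sub hD).div (measurable_const.sub hπ₁m)
  have hw₁ : MemLp (fun ω => D (X ω) / π₁ (X ω)) ∞ P :=
    memLp_top_of_mem_Icc (hw₁m.comp hX).aestronglyMeasurable
      fun ω => div_mem_Icc_zero_one_div hc.1 (hDr _) (hπ₁r _).1
  have hw₀ : MemLp (fun ω => (1 - D (X ω)) / (1 - π₁ (X ω))) ∞ P :=
    memLp_top_of_mem_Icc (hw₀m.comp hX).aestronglyMeasurable
      fun ω => div_mem_Icc_zero_one_div hc.1 (hD' _) (hπ' _)
  have hg : MemLp (fun ω => D (X ω) * μ₁ (X ω) + (1 - D (X ω)) * μ₀ (X ω)) 2 P :=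
    (hμ₁L2.mul' (memLp_top_of_mem_Icc (hD.comp hX).aestronglyMeasurable fun ω => hDr _)).add
      (hμ₀L2.mul' (memLp_top_of_mem_Icc ((measurable_const.sub hD).comp hX).aestronglyMeasurable
        fun ω => hD' _))
  rw [aipw_eq_add_ipwResidual hAbin, variance_add_of_condExp_eq_zero hm hg
    (hXm ((hD.mul hμ₁m).add ((measurable_const.sub hD).mul hμ₀m)))
    (memLp_ipwResidual hAb hYL2 hw₁ hw₀ hμ₁L2 hμ₀L2)
    (condExp_ipwResidual hm hAb hYL2 hw₁ (hXm hw₁m) hw₀ (hXm hw₀m) hμ₁L2 (hXm hμ₁m) hμ₀L2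
      (hXm hμ₀m) hcondA hcond1 hcond0), ← integral_condExp hm]
  refine congrArg _ (integral_congr_ae ((condExp_ipwResidual_sq hm hAbin hAb hYL2 hw₁ (hXm hw₁m)
    hw₀ (hXm hw₀m) hμ₁L2 (hXm hμ₁m) hμ₀L2 (hXm hμ₀m) hcondA hcond1 hcond0 hcondsq1 hcondsq0).trans
    (ae_of_all _ fun ω => ?_)))
  have hπ₁ : π₁ (X ω) ≠ 0 := (hc.1.trans_le (hπ₁r _).1).ne'
  have hπ₀ : 1 - π₁ (X ω) ≠ 0 := (hc.1.trans_le (hπ' _)).ne'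
  field_simp

/-- Variance decomposition of the AIPW score with true nuisances: for every
measurable `D : 𝒳 → [0,1]`,
`Var(ψ(D, π₁, (μ₁,μ₀))) = Var(D(X)μ₁(X) + (1−D(X))μ₀(X))
  + E[D(X)²σ₁²(X)/π₁(X) + (1−D(X))²σ₀²(X)/(1−π₁(X))]`. -/
theorem stmt_9 {Ω 𝒳 : Type*} [MeasurableSpace Ω] [MeasurableSpace 𝒳]
    (P : Measure Ω) [IsProbabilityMeasure P]
    (X : Ω → 𝒳) (A Y : Ω → ℝ)
    (hX : Measurable X) (hA : Measurable A) (hY : Measurable Y)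
    (hAbin : ∀ ω, A ω = 0 ∨ A ω = 1) (hYL2 : MemLp Y 2 P)
    (c : ℝ) (hc : c ∈ Set.Ioo (0 : ℝ) (1 / 2))
    (π₁ : 𝒳 → ℝ) (hπ₁m : Measurable π₁) (hπ₁r : ∀ x, π₁ x ∈ Set.Icc c (1 - c))
    (hcondA : P[A | MeasurableSpace.comap X inferInstance]
      =ᵐ[P] fun ω => π₁ (X ω))
    (μ₁ μ₀ : 𝒳 → ℝ) (hμ₁m : Measurable μ₁) (hμ₀m : Measurable μ₀)
    (hμ₁L2 : MemLp (fun ω => μ₁ (X ω)) 2 P) (hμ₀L2 : MemLp (fun ω => μ₀ (X ω)) 2 P)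
    (hcond1 : P[fun ω => A ω * Y ω | MeasurableSpace.comap X inferInstance]
      =ᵐ[P] fun ω => μ₁ (X ω) * π₁ (X ω))
    (hcond0 : P[fun ω => (1 - A ω) * Y ω | MeasurableSpace.comap X inferInstance]
      =ᵐ[P] fun ω => μ₀ (X ω) * (1 - π₁ (X ω)))
    (σ₁sq σ₀sq : 𝒳 → ℝ) (hσ₁m : Measurable σ₁sq) (hσ₀m : Measurable σ₀sq)
    (hσ₁nn : ∀ x, 0 ≤ σ₁sq x) (hσ₀nn : ∀ x, 0 ≤ σ₀sq x)
    (hσ₁L1 : Integrable (fun ω => σ₁sq (X ω)) P)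
    (hσ₀L1 : Integrable (fun ω => σ₀sq (X ω)) P)
    (hcondsq1 : P[fun ω => A ω * Y ω ^ 2 | MeasurableSpace.comap X inferInstance]
      =ᵐ[P] fun ω => (μ₁ (X ω) ^ 2 + σ₁sq (X ω)) * π₁ (X ω))
    (hcondsq0 : P[fun ω => (1 - A ω) * Y ω ^ 2 | MeasurableSpace.comap X inferInstance]
      =ᵐ[P] fun ω => (μ₀ (X ω) ^ 2 + σ₀sq (X ω)) * (1 - π₁ (X ω))) :
    ∀ D : 𝒳 → ℝ, Measurable D → (∀ x, D x ∈ Set.Icc (0 : ℝ) 1) →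
      variance (aipw X A Y D π₁ μ₁ μ₀) P
        = variance (fun ω => D (X ω) * μ₁ (X ω) + (1 - D (X ω)) * μ₀ (X ω)) P
          + ∫ ω, (D (X ω) ^ 2 * σ₁sq (X ω) / π₁ (X ω)
              + (1 - D (X ω)) ^ 2 * σ₀sq (X ω) / (1 - π₁ (X ω))) ∂P :=
  stmt_9_general P X A Y hX hA hAbin hYL2 c hc π₁ hπ₁m hπ₁r hcondA μ₁ μ₀ hμ₁m hμ₀m hμ₁L2 hμ₀L2
    hcond1 hcond0 σ₁sq σ₀sq hcondsq1 hcondsq0
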